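/- Let p be a prime, q = p^n, and m ≥ 2. Then K_p(GL_m(F_q)) = ℚ, i.e. every irreducible complex character of GL_m(F_q) takes rational values at every element of order p. -/

import Mathlib

/-!
Let `g ∈ GL_m(F_q)` have order `p`. In characteristic `p`, `N = g - 1` satisfies
`N ^ p = g ^ p - 1 = 0`. For `p ∤ k` we have `g ^ k - 1 = N * u(N)`, where
`u = ∑_{i<k} (1 + X) ^ i` has constant term `k ≠ 0`. Writing `F^m` as `⨁ F[X]/(X^j)` for the
action of `N`, the substitution `X ↦ X * u` is an automorphism of each `F[X]/(X^j)`, so `N` is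
conjugate to `g ^ k - 1` and `g` to `g ^ k`.

Hence every character `χ` takes one value on all `g ^ i` with `0 < i < p`, and averaging over
`⟨g⟩` gives `χ(1) + (p - 1) χ(g) = p · dim V^⟨g⟩`, so `χ(g)` is rational.
-/

open CategoryTheory

/-- `zeta N` is the root of unity `e^{2 π i / N}`. -/
noncomputable def zeta (N : ℕ) : ℂ := Complex.exp (2 * Real.pi * Complex.I / N)

/-- `charField G` is the field `K(G)` generated over `ℚ` by all values of
irreducible complex characters of `G`. -/
noncomputable def charField (G : Type) [Group G] : IntermediateField ℚ ℂ :=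
  IntermediateField.adjoin ℚ
    {x : ℂ | ∃ V : FDRep ℂ G, Simple V ∧ ∃ g : G, V.character g = x}

/-- `charFieldAt G d` is the field `K_d(G)` generated over `ℚ` by the values of
irreducible complex characters of `G` at elements of order exactly `d`. -/
noncomputable def charFieldAt (G : Type) [Group G] (d : ℕ) : IntermediateField ℚ ℂ :=
  IntermediateField.adjoin ℚ
    {x : ℂ | ∃ V : FDRep ℂ G, Simple V ∧ ∃ g : G, orderOf g = d ∧ V.character g = x}

open Polynomial Module

namespace Polynomial

section CommRing

variable {R : Type*} [CommRing R]

theorem X_dvd_comp_X_mul_iff {u w : R[X]} : X ∣ w.comp (X * u) ↔ X ∣ w := by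
  simp only [X_dvd_iff, coeff_zero_eq_eval_zero, eval_comp, eval_mul, eval_X, zero_mul]

theorem X_pow_dvd_of_X_pow_dvd_comp [IsDomain R] {u : R[X]} (hu : ¬ X ∣ u) {j : ℕ} :
    ∀ {f : R[X]}, X ^ j ∣ f.comp (X * u) → X ^ j ∣ f := by
  induction j with
  | zero => exact fun {f} _ => one_dvd f
  | succ j ih =>
    intro f h
    obtain ⟨w, rfl⟩ := ih ((pow_dvd_pow X j.le_succ).trans h)
    rw [mul_comp, X_pow_comp, mul_pow, mul_assoc, pow_succ] at h
    have hX : X ∣ u ^ j * w.comp (X * u) :=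
      (mul_dvd_mul_iff_left (pow_ne_zero j X_ne_zero)).mp h
    have hw : X ∣ w := X_dvd_comp_X_mul_iff.mp
      ((prime_X.dvd_or_dvd hX).resolve_left fun h' => hu (prime_X.dvd_of_dvd_pow h'))
    rw [pow_succ]
    exact mul_dvd_mul_left _ hw

end CommRing

variable {F : Type*} [Field F] {u : F[X]}

theorem exists_algEquiv_quotient_X_pow (hu : ¬ X ∣ u) (j : ℕ) :
    ∃ e : (F[X] ⧸ Ideal.span {(X : F[X]) ^ j}) ≃ₐ[F] (F[X] ⧸ Ideal.span {(X : F[X]) ^ j}),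
      ∀ f, e (Ideal.Quotient.mk _ f) = Ideal.Quotient.mk _ (f.comp (X * u)) := by
  have : FiniteDimensional F (F[X] ⧸ Ideal.span {(X : F[X]) ^ j}) :=
    (AdjoinRoot.powerBasis' (monic_X_pow j)).finite
  have hcomap : (Ideal.span {(X : F[X]) ^ j}).comap (aeval (R := F) (X * u)) =
      Ideal.span {(X : F[X]) ^ j} := by
    ext f
    simp only [Ideal.mem_comap, Ideal.mem_span_singleton, ← comp_eq_aeval]
    refine ⟨X_pow_dvd_of_X_pow_dvd_comp hu, fun h => ?_⟩
    have := _root_.map_dvd (aeval (X * u)) h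
    rw [map_pow, aeval_X, mul_pow] at this
    exact (dvd_mul_right _ _).trans this
  let φ := Ideal.quotientMapₐ _ (aeval (R := F) (X * u)) hcomap.ge
  have hφ : Function.Injective φ := Ideal.quotientMap_injective' (H := hcomap.ge) hcomap.le
  refine ⟨AlgEquiv.ofBijective φ
    ⟨hφ, (LinearMap.injective_iff_surjective (f := φ.toLinearMap)).mp hφ⟩, fun f => ?_⟩
  rw [comp_eq_aeval]
  rfl

theorem exists_linearEquiv_quotient_X_pow (hu : ¬ X ∣ u) (j : ℕ) :
    ∃ e : (F[X] ⧸ (F[X] ∙ (X : F[X]) ^ j)) ≃ₗ[F] (F[X] ⧸ (F[X] ∙ (X : F[X]) ^ j)),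
      ∀ c, e ((X : F[X]) • c) = (X * u) • e c := by
  obtain ⟨e, he⟩ := exists_algEquiv_quotient_X_pow hu j
  have he_smul (c : F[X] ⧸ Ideal.span {(X : F[X]) ^ j}) :
      e ((X : F[X]) • c) = (X * u) • e c := by
    obtain ⟨f, rfl⟩ := Ideal.Quotient.mk_surjective c
    simp only [← Ideal.Quotient.mk_eq_mk, ← Submodule.Quotient.mk_smul, smul_eq_mul]
    simp only [Ideal.Quotient.mk_eq_mk, he, mul_comp, X_comp]
    rfl
  exact ⟨e.toLinearEquiv, he_smul⟩

end Polynomial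

section Field

variable {F : Type*} [Field F] {u : F[X]}

open scoped DirectSum in
theorem Module.exists_linearEquiv_X_smul_eq_of_isTorsion' {M : Type*} [AddCommGroup M]
    [Module F[X] M] [Module F M] [IsScalarTower F F[X] M] [Module.Finite F[X] M]
    (hM : IsTorsion' M (Submonoid.powers (X : F[X]))) (hu : ¬ X ∣ u) :
    ∃ τ : M ≃ₗ[F] M, ∀ m, τ ((X : F[X]) • m) = (X * u) • τ m := by
  obtain ⟨d, k, ⟨Θ⟩⟩ := torsion_by_prime_power_decomposition irreducible_X hM
  choose σ hσ using fun i : Fin d => exists_linearEquiv_quotient_X_pow hu (k i)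
  let σD : (⨁ i, F[X] ⧸ (F[X] ∙ (X : F[X]) ^ k i)) ≃ₗ[F] _ :=
    DFinsupp.mapRange.linearEquiv σ
  have hσD (x) : σD ((X : F[X]) • x) = (X * u) • σD x := DFinsupp.ext fun i => by
    rw [DirectSum.smul_apply, DFinsupp.mapRange.linearEquiv_apply, DFinsupp.mapRange_apply,
      DFinsupp.mapRange.linearEquiv_apply, DFinsupp.mapRange_apply, DirectSum.smul_apply, hσ]
  refine ⟨(Θ.restrictScalars F).trans (σD.trans (Θ.symm.restrictScalars F)), fun m => ?_⟩
  simp [hσD]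

theorem Module.End.isConj_aeval_X_mul {V : Type*} [AddCommGroup V] [Module F V]
    [FiniteDimensional F V] {N : Module.End F V} (hN : IsNilpotent N) (hu : ¬ X ∣ u) :
    IsConj N (aeval N (X * u)) := by
  obtain ⟨d, hd⟩ := hN
  have hT : IsTorsion' (AEval' N) (Submonoid.powers (X : F[X])) := fun m =>
    ⟨⟨X ^ d, d, rfl⟩, (AEval'.of N).symm.injective <| by
      change (AEval'.of N).symm ((X : F[X]) ^ d • m) = _
      simp [hd]⟩
  obtain ⟨τ, hτ⟩ := exists_linearEquiv_X_smul_eq_of_isTorsion' hT hu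
  let e : V ≃ₗ[F] V := (AEval'.of N).trans (τ.trans (AEval'.of N).symm)
  refine ⟨(LinearMap.GeneralLinearGroup.generalLinearEquiv F V).symm e,
    LinearMap.ext fun v => ?_⟩
  change e (N v) = aeval N (X * u) (e v)
  simp [e, ← AEval'.X_smul_of, hτ]

theorem LinearMap.GeneralLinearGroup.isConj_pow_of_isNilpotent_sub_one {V : Type*}
    [AddCommGroup V] [Module F V] [FiniteDimensional F V] {φ : GeneralLinearGroup F V}
    (hφ : IsNilpotent ((φ : Module.End F V) - 1)) {k : ℕ} (hk : (k : F) ≠ 0) :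
    IsConj φ (φ ^ k) := by
  let u : F[X] := ∑ i ∈ Finset.range k, (1 + X) ^ i
  have hXu : X * u = (1 + X) ^ k - 1 := by
    rw [mul_comm, ← geom_sum_mul, add_sub_cancel_left]
  have hu : ¬ X ∣ u := by
    simpa [u, X_dvd_iff, coeff_zero_eq_eval_zero, eval_finsetSum] using hk
  obtain ⟨c, hc⟩ := Module.End.isConj_aeval_X_mul hφ hu
  have hcφ : SemiconjBy (c : Module.End F V) φ (φ ^ k : GeneralLinearGroup F V) := by
    simpa [hXu] using hc.add_right (SemiconjBy.one_right (c : Module.End F V))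
  exact isConj_iff.mpr ⟨c, by rw [(SemiconjBy.units_of_val hcφ).eq, mul_inv_cancel_right]⟩

end Field

theorem isNilpotent_sub_one_of_pow_char_eq_one {R A : Type*} [CommRing R] [Ring A] [Algebra R A]
    {p : ℕ} [Fact p.Prime] [CharP R p] {a : A} (ha : a ^ p = 1) : IsNilpotent (a - 1) :=
  ⟨p, by simpa [ha] using congrArg (aeval a) (sub_pow_char (X : R[X]) 1 (p := p))⟩

theorem Matrix.GeneralLinearGroup.isConj_pow_of_pow_char_eq_one {n F : Type*} [Fintype n]
    [DecidableEq n] [Field F] {p : ℕ} [Fact p.Prime] [CharP F p] {g : GL n F} (hg : g ^ p = 1)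
    {k : ℕ} (hk : ¬ p ∣ k) : IsConj g (g ^ k) := by
  let ψ := toLin (n := n) (R := F)
  have hψ : IsNilpotent ((ψ g : Module.End F (n → F)) - 1) :=
    isNilpotent_sub_one_of_pow_char_eq_one (R := F) (p := p) <| by
      rw [← Units.val_pow_eq_pow_val, ← map_pow, hg, map_one, Units.val_one]
  have hk' : (k : F) ≠ 0 := by rwa [Ne, CharP.cast_eq_zero_iff F p]
  simpa using ψ.symm.toMonoidHom.map_isConj
    (LinearMap.GeneralLinearGroup.isConj_pow_of_isNilpotent_sub_one hψ hk')

namespace Representation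

variable {k G V : Type*} [Field k] [CharZero k] [Group G] [Finite G] [AddCommGroup V]
  [Module k V] [FiniteDimensional k V]

theorem sum_range_orderOf_character_pow (ρ : Representation k G V) (g : G) :
    ∑ i ∈ Finset.range (orderOf g), ρ.character (g ^ i) =
      orderOf g * finrank k (invariants (ρ.comp (Subgroup.zpowers g).subtype)) := by
  have := Fintype.ofFinite (Subgroup.zpowers g)
  have hg : (orderOf g : k) ≠ 0 := Nat.cast_ne_zero.mpr (orderOf_pos g).ne'
  have : Invertible (Nat.card (Subgroup.zpowers g) : k) := by
    rw [Nat.card_zpowers]; exact invertibleOfNonzero hg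
  rw [← card_inv_mul_sum_char_eq_finrank, Nat.card_zpowers, mul_inv_cancel_left₀ hg,
    ← Fin.sum_univ_eq_sum_range]
  exact Fintype.sum_equiv (finEquivZPowers (isOfFinOrder_of_finite g)) _ _ fun i => rfl

theorem character_mem_range_algebraMap {p : ℕ} (hp : p.Prime) (ρ : Representation k G V)
    {g : G} (hg : orderOf g = p) (hconj : ∀ i, ¬ p ∣ i → IsConj g (g ^ i)) :
    ρ.character g ∈ Set.range (algebraMap ℚ k) := by
  obtain ⟨r, rfl⟩ : ∃ r, p = r + 1 := ⟨p - 1, (Nat.sub_add_cancel hp.one_le).symm⟩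
  have hr : (r : k) ≠ 0 := Nat.cast_ne_zero.mpr (by have := hp.two_le; omega)
  have hpow (i : ℕ) (hi : i < r) : ρ.character (g ^ (i + 1)) = ρ.character g := by
    obtain ⟨c, hc⟩ :=
      isConj_iff.mp (hconj (i + 1) (Nat.not_dvd_of_pos_of_lt i.succ_pos (by omega)))
    rw [← hc, char_conj]
  have hsum := sum_range_orderOf_character_pow ρ g
  rw [hg, Finset.sum_range_succ', Finset.sum_congr rfl fun i hi => hpow i (Finset.mem_range.mp hi),
    Finset.sum_const, Finset.card_range, nsmul_eq_mul, pow_zero, char_one] at hsum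
  refine ⟨(((r + 1 : ℕ) : ℚ) * finrank k (invariants (ρ.comp (Subgroup.zpowers g).subtype))
    - finrank k V) / r, ?_⟩
  rw [map_div₀, map_natCast, div_eq_iff hr]
  push_cast at hsum ⊢
  linear_combination -hsum

end Representation

theorem statement3_general (p n m q : ℕ) (hp : p.Prime)
    (hq : q = p ^ n) (F : Type) [Field F] [Fintype F] (hF : Fintype.card F = q) :
    charFieldAt (GL (Fin m) F) p = ⊥ := by
  have := Fact.mk hp
  have : CharP F p := charP_of_card_eq_prime_pow (hF.trans hq)
  refine le_bot_iff.mp (IntermediateField.adjoin_le_iff.mpr ?_)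
  rintro _ ⟨V, -, g, hg, rfl⟩
  refine IntermediateField.mem_bot.mpr <|
    Representation.character_mem_range_algebraMap hp V.ρ hg fun k hk => ?_
  exact Matrix.GeneralLinearGroup.isConj_pow_of_pow_char_eq_one (hg ▸ pow_orderOf_eq_one g) hk

/-- `K_p(GL_m(F_q)) = ℚ`: every irreducible character of `GL_m(F_q)`
takes rational values on elements of order `p`. -/
theorem statement3 (p n m q : ℕ) (hp : p.Prime) (hn : 1 ≤ n) (hm : 2 ≤ m)
    (hq : q = p ^ n) (F : Type) [Field F] [Fintype F] (hF : Fintype.card F = q) :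
    charFieldAt (GL (Fin m) F) p = ⊥ :=
  statement3_general p n m q hp hq F hF
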